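/- arXiv:math/9805049 — 6 statements merged into one kernel-verified Lean document; each statement's English description precedes it below -/
import Mathlib

section
/- Under the deformation setup below, the operators T_n satisfy: (a) T_n(π(f)) = 0 for every f ∈ A and every n ≥ 1 (so T fixes pure prolongations: T(π(f),0,0,…) = (π(f),0,0,…)); (b) T_n(J) = 0 for every n ≥ 1 (so T(Ĵ) = Ĵ); and (c) for every formal series f : ℕ → A, the extended map T satisfies (T(f ∗ Ĵ))_n = f_n · J for every n ∈ ℕ. -/
/-!
Since `J` is regular and `π` kills multiples of `J`, `p_J(a J) = a`; hence the recursion for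
`T_N` evaluated at `a J = M_0(a, J)` says exactly that `∑_{m+k=N} T_m(M_k(a, J)) = 0` for
`N ≥ 1`.
Reassociating the triple sum `∑_{m+k+i=n} T_m(M_k(f_i, J))` that computes `(T(f ∗ Ĵ))_n`, only
the term `N = 0` survives, giving `f_n J`. Parts (a) and (b) hold because `p_J(π f) = 0` and
`p_J(J) = 1`, while `M_k(0, J) = M_k(1, J) = 0` for `k ≥ 1`.
-/

/-- The operators `T_n` of the star product reduction: `T_0 = id` and
`T_n(f) = -∑_{k=1}^{n} T_{n-k}(M_k(p_J(f), J))` for `n ≥ 1`. -/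
noncomputable def Tred {A : Type*} [CommRing A] (J : A) (pJ : A → A)
    (M : ℕ → A → A → A) : ℕ → A → A
  | 0, f => f
  | (n+1), f =>
      -∑ k ∈ (Finset.range (n+1)).attach,
        Tred J pJ M k.1 (M (n+1-k.1) (pJ f) J)
  termination_by n _ => n
  decreasing_by
    have := k.2
    simp only [Finset.mem_range] at this
    omega

/-- The star product of two formal series: `(f ∗ g)_n = ∑_{k+i+j=n} M_k(f_i, g_j)`. -/
noncomputable def starSeq {A : Type*} [CommRing A] (M : ℕ → A → A → A)
    (f g : ℕ → A) : ℕ → A :=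
  fun n => ∑ p ∈ Finset.HasAntidiagonal.antidiagonal n, ∑ q ∈ Finset.HasAntidiagonal.antidiagonal p.2,
    M p.1 (f q.1) (g q.2)

/-- The constraint function `J` viewed as a formal series `Ĵ = (J, 0, 0, …)`. -/
def Jhat {A : Type*} [CommRing A] (J : A) : ℕ → A :=
  fun n => if n = 0 then J else 0

/-- The extension of `T` to formal series: `(T f)_n = ∑_{m=0}^{n} T_m(f_{n-m})`. -/
noncomputable def Text {A : Type*} [CommRing A] (J : A) (pJ : A → A)
    (M : ℕ → A → A → A) (f : ℕ → A) : ℕ → A :=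
  fun n => ∑ m ∈ Finset.range (n+1), Tred J pJ M m (f (n-m))

open Finset

theorem Finset.Nat.sum_antidiagonal_sum_antidiagonal_snd {β : Type*} [AddCommMonoid β]
    (g : ℕ → ℕ → ℕ → β) (n : ℕ) :
    ∑ p ∈ antidiagonal n, ∑ q ∈ antidiagonal p.2, g p.1 q.1 q.2 =
      ∑ p ∈ antidiagonal n, ∑ q ∈ antidiagonal p.1, g q.1 q.2 p.2 := by
  simp only [Finset.sum_sigma']
  apply Finset.sum_nbij' (fun ⟨⟨i, _⟩, ⟨k, l⟩⟩ ↦ ⟨(i + k, l), (i, k)⟩)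
    (fun ⟨⟨_, l⟩, ⟨i, k⟩⟩ ↦ ⟨(i, k + l), (k, l)⟩) <;> aesop (add simp [add_assoc])

section Decomposition

variable {A : Type*} [Ring A] {J : A} {π pJ : A → A}

theorem pJ_apply_mul_J (hJreg : ∀ a : A, a * J = 0 → a = 0) (hπJ : ∀ a : A, π (a * J) = 0)
    (hdecomp : ∀ f : A, f = π f + pJ f * J) (a : A) : pJ (a * J) = a := by
  refine sub_eq_zero.mp (hJreg _ ?_)
  have h := hdecomp (a * J)
  rw [hπJ, zero_add] at h
  rw [sub_mul, ← h, sub_self]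

theorem pJ_apply_π (hJreg : ∀ a : A, a * J = 0 → a = 0) (hπidem : ∀ a : A, π (π a) = π a)
    (hdecomp : ∀ f : A, f = π f + pJ f * J) (f : A) : pJ (π f) = 0 := by
  refine hJreg _ ?_
  have h := hdecomp (π f)
  rwa [hπidem, left_eq_add] at h

end Decomposition

theorem starSeq_Jhat {A : Type*} [CommRing A] (M : ℕ → A → A → A)
    (hM : ∀ k a, M k a 0 = 0) (J : A) (f : ℕ → A) (n : ℕ) :
    starSeq M f (Jhat J) n = ∑ p ∈ antidiagonal n, M p.1 (f p.2) J := by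
  refine sum_congr rfl fun p _ => ?_
  rw [sum_eq_single (p.2, 0)]
  · simp [Jhat]
  · intro q hq hne
    have : q.2 ≠ 0 := fun h0 => hne (Prod.ext (by simp_all [HasAntidiagonal.mem_antidiagonal]) h0)
    simp [Jhat, this, hM]
  · simp

namespace Tred

variable {A : Type*} [CommRing A] (J : A)

theorem zero_apply (pJ : A → A) (M : ℕ → A → A → A) (f : A) : Tred J pJ M 0 f = f := by
  rw [Tred]

theorem succ_apply (pJ : A → A) (M : ℕ → A → A → A) (n : ℕ) (f : A) :
    Tred J pJ M (n + 1) f = -∑ p ∈ antidiagonal n, Tred J pJ M p.1 (M (p.2 + 1) (pJ f) J) := by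
  rw [Tred, sum_attach (range (n + 1)) (fun k => Tred J pJ M k (M (n + 1 - k) (pJ f) J)),
    Nat.sum_antidiagonal_eq_sum_range_succ (fun i j => Tred J pJ M i (M (j + 1) (pJ f) J))]
  refine congrArg _ (sum_congr rfl fun k hk => ?_)
  rw [Nat.sub_add_comm (Nat.lt_succ_iff.mp (mem_range.mp hk))]

variable {R : Type*} [CommSemiring R] [Module R A] (pJ : A →ₗ[R] A)
  (M : ℕ → A →ₗ[R] A →ₗ[R] A)

theorem map_add (n : ℕ) (x y : A) :
    Tred J (pJ ·) (fun k a b => M k a b) n (x + y) =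
      Tred J (pJ ·) (fun k a b => M k a b) n x + Tred J (pJ ·) (fun k a b => M k a b) n y := by
  induction n using Nat.strong_induction_on generalizing x y with
  | _ n ih =>
    cases n with
    | zero => simp only [zero_apply]
    | succ n =>
      simp only [succ_apply, _root_.map_add, LinearMap.add_apply, ← neg_add, ← sum_add_distrib]
      exact congrArg _ (sum_congr rfl fun p hp =>
        ih _ (Nat.antidiagonal.fst_lt hp) _ _)

theorem map_zero (n : ℕ) : Tred J (pJ ·) (fun k a b => M k a b) n 0 = 0 :=
  (AddMonoidHom.mk' _ (map_add J pJ M n)).map_zero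

theorem map_sum {ι : Type*} (n : ℕ) (s : Finset ι) (g : ι → A) :
    Tred J (pJ ·) (fun k a b => M k a b) n (∑ i ∈ s, g i) =
      ∑ i ∈ s, Tred J (pJ ·) (fun k a b => M k a b) n (g i) :=
  _root_.map_sum (AddMonoidHom.mk' _ (map_add J pJ M n)) g s

theorem succ_apply_eq_zero {f : A} (hf : ∀ k, M (k + 1) (pJ f) J = 0) (n : ℕ) :
    Tred J (pJ ·) (fun k a b => M k a b) (n + 1) f = 0 := by
  simp only [succ_apply, hf, map_zero, sum_const_zero, neg_zero]

theorem sum_antidiagonal_apply_M {a : A} (hpJ : pJ (a * J) = a) (hM0 : M 0 a J = a * J) (N : ℕ) :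
    ∑ p ∈ antidiagonal N, Tred J (pJ ·) (fun k a b => M k a b) p.1 (M p.2 a J) =
      if N = 0 then a * J else 0 := by
  cases N with
  | zero => simp [zero_apply, hM0]
  | succ n =>
    rw [Nat.sum_antidiagonal_succ', hM0, succ_apply, hpJ, if_neg n.succ_ne_zero, neg_add_cancel]

end Tred

theorem Text_starSeq_Jhat {R A : Type*} [CommSemiring R] [CommRing A] [Module R A] (J : A)
    (pJ : A →ₗ[R] A) (M : ℕ → A →ₗ[R] A →ₗ[R] A) (hpJ : ∀ a, pJ (a * J) = a)
    (hM0 : ∀ a, M 0 a J = a * J) (f : ℕ → A) (n : ℕ) :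
    Text J (pJ ·) (fun k a b => M k a b) (starSeq (fun k a b => M k a b) f (Jhat J)) n =
      f n * J := by
  calc _ = ∑ p ∈ antidiagonal n, Tred J (pJ ·) (fun k a b => M k a b) p.1
          (∑ q ∈ antidiagonal p.2, M q.1 (f q.2) J) := by
        rw [Text, ← Nat.sum_antidiagonal_eq_sum_range_succ
          (fun i j => Tred J (pJ ·) (fun k a b => M k a b) i (starSeq _ f (Jhat J) j))]
        simp only [starSeq_Jhat _ (fun k a => (M k a).map_zero)]
    _ = ∑ p ∈ antidiagonal n, ∑ q ∈ antidiagonal p.1,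
          Tred J (pJ ·) (fun k a b => M k a b) q.1 (M q.2 (f p.2) J) := by
        simp only [Tred.map_sum]
        exact Nat.sum_antidiagonal_sum_antidiagonal_snd
          (fun i k j => Tred J (pJ ·) (fun k a b => M k a b) i (M k (f j) J)) n
    _ = ∑ p ∈ antidiagonal n, if p.1 = 0 then f p.2 * J else 0 :=
        sum_congr rfl fun p _ => Tred.sum_antidiagonal_apply_M J pJ M (hpJ _) (hM0 _) p.1
    _ = f n * J := by
        rw [Nat.sum_antidiagonal_eq_sum_range_succ (fun i j => if i = 0 then f j * J else 0)]
        simp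

theorem T_fixes_prolongations_and_maps_star_mult_to_mult
    {R A : Type*} [CommRing R] [CommRing A] [Algebra R A]
    (J : A) (hJreg : ∀ a : A, a * J = 0 → a = 0)
    (π pJ : A →ₗ[R] A)
    (hπidem : ∀ a : A, π (π a) = π a)
    (hπJ : ∀ a : A, π (a * J) = 0)
    (hdecomp : ∀ f : A, f = π f + pJ f * J)
    (M : ℕ → A →ₗ[R] A →ₗ[R] A)
    (hM0 : ∀ f g : A, M 0 f g = f * g)
    (hMone : ∀ k, 1 ≤ k → ∀ f : A, M k 1 f = 0 ∧ M k f 1 = 0) :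
    (∀ f : A, ∀ n, 1 ≤ n →
        Tred J (pJ ·) (fun k a b => M k a b) n (π f) = 0) ∧
    (∀ n, 1 ≤ n → Tred J (pJ ·) (fun k a b => M k a b) n J = 0) ∧
    (∀ f : ℕ → A, ∀ n : ℕ,
        Text J (pJ ·) (fun k a b => M k a b)
          (starSeq (fun k a b => M k a b) f (Jhat J)) n = f n * J) := by
  have hpJ_mul : ∀ a : A, pJ (a * J) = a := pJ_apply_mul_J hJreg hπJ hdecomp
  have hpJ_J : pJ J = 1 := by simpa using hpJ_mul 1
  refine ⟨fun f n hn => ?_, fun n hn => ?_, Text_starSeq_Jhat J pJ M hpJ_mul (hM0 · J)⟩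
  · obtain ⟨n, rfl⟩ := Nat.exists_eq_add_of_le' hn
    refine Tred.succ_apply_eq_zero J pJ M (fun k => ?_) n
    rw [pJ_apply_π hJreg hπidem hdecomp, map_zero, LinearMap.zero_apply]
  · obtain ⟨n, rfl⟩ := Nat.exists_eq_add_of_le' hn
    refine Tred.succ_apply_eq_zero J pJ M (fun k => ?_) n
    rw [hpJ_J]
    exact (hMone (k + 1) k.succ_pos J).1
end

section
/- Under the deformation setup below, the space of formal series decomposes as a direct sum F ⊕ I*: every series f : ℕ → A can be written as f = φ + ι with φ ∈ F := {φ : ℕ → A | π(φ_n) = φ_n for all n} and ι ∈ I* := {ι : ℕ → A | ι = g ∗ Ĵ for some series g}, and this decomposition is unique (if φ + ι = φ' + ι' with φ, φ' ∈ F and ι, ι' ∈ I*, then φ = φ' and ι = ι'). -/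
open Finset

lemma snd_lt_of_mem_erase_antidiagonal {n : ℕ} {p : ℕ × ℕ}
    (hp : p ∈ (antidiagonal n).erase (0, n)) : p.2 < n := by
  obtain ⟨hne, hsum⟩ := mem_erase.1 hp
  rw [HasAntidiagonal.mem_antidiagonal] at hsum
  by_contra! h
  exact hne (Prod.ext (by omega) (by omega))

section StarJhat

variable {A : Type*} [CommRing A] (M : ℕ → A → A → A) (J : A)

/-- The part `∑_{k ≥ 1, k + i = n} M_k(g_i, J)` of `(g ∗ Ĵ)_n` beyond the classical product. -/
noncomputable def starJhatTail (g : ℕ → A) (n : ℕ) : A :=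
  ∑ p ∈ (antidiagonal n).erase (0, n), M p.1 (g p.2) J

lemma starJhatTail_congr {g g' : ℕ → A} {n : ℕ} (h : ∀ i < n, g i = g' i) :
    starJhatTail M J g n = starJhatTail M J g' n :=
  sum_congr rfl fun p hp => by rw [h p.2 (snd_lt_of_mem_erase_antidiagonal hp)]

lemma starSeq_Jhat_apply (hM : ∀ k a, M k a 0 = 0) (g : ℕ → A) (n : ℕ) :
    starSeq M g (Jhat J) n = ∑ p ∈ antidiagonal n, M p.1 (g p.2) J := by
  refine sum_congr rfl fun p _ => ?_
  rw [sum_eq_single_of_mem (p.2, 0) (by simp)]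
  · simp [Jhat]
  · intro q hq hne
    rw [HasAntidiagonal.mem_antidiagonal] at hq
    have hq₂ : q.2 ≠ 0 := fun h => hne (Prod.ext (by omega) h)
    simp [Jhat, hq₂, hM]

lemma starSeq_Jhat_apply_eq_mul_add_tail (hM0 : ∀ a b, M 0 a b = a * b)
    (hM : ∀ k a, M k a 0 = 0) (g : ℕ → A) (n : ℕ) :
    starSeq M g (Jhat J) n = g n * J + starJhatTail M J g n := by
  rw [starSeq_Jhat_apply M J hM, ← add_sum_erase _ _ (by simp : ((0 : ℕ), n) ∈ antidiagonal n),
    hM0, starJhatTail]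

/-- The series `g` with `g_n = p_J(f_n - T_n(g))`; its star product with `Ĵ` is the `I*`-part
of `f`. -/
noncomputable def starJhatQuot (pJ : A → A) (f : ℕ → A) : ℕ → A
  | n => pJ (f n - ∑ p ∈ ((antidiagonal n).erase (0, n)).attach,
      M p.1.1 (starJhatQuot pJ f p.1.2) J)
  decreasing_by exact snd_lt_of_mem_erase_antidiagonal p.2

lemma starJhatQuot_apply (pJ : A → A) (f : ℕ → A) (n : ℕ) :
    starJhatQuot M J pJ f n = pJ (f n - starJhatTail M J (starJhatQuot M J pJ f) n) := by
  rw [starJhatQuot, starJhatTail,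
    sum_attach _ fun p : ℕ × ℕ => M p.1 (starJhatQuot M J pJ f p.2) J]

theorem fixed_sub_starSeq_Jhat_starJhatQuot (π pJ : A → A) (hπidem : ∀ a, π (π a) = π a)
    (hdecomp : ∀ a, a = π a + pJ a * J) (hM0 : ∀ a b, M 0 a b = a * b)
    (hM : ∀ k a, M k a 0 = 0) (f : ℕ → A) (n : ℕ) :
    π ((f - starSeq M (starJhatQuot M J pJ f) (Jhat J)) n)
      = (f - starSeq M (starJhatQuot M J pJ f) (Jhat J)) n := by
  set r := f n - starJhatTail M J (starJhatQuot M J pJ f) n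
  have hr : (f - starSeq M (starJhatQuot M J pJ f) (Jhat J)) n = π r := by
    rw [Pi.sub_apply, starSeq_Jhat_apply_eq_mul_add_tail M J hM0 hM, starJhatQuot_apply]
    linear_combination hdecomp r
  rw [hr, hπidem]

theorem eq_of_add_starSeq_Jhat_eq (π : A →+ A) (hJreg : ∀ a, a * J = 0 → a = 0)
    (hπJ : ∀ a, π (a * J) = 0) (hM0 : ∀ a b, M 0 a b = a * b) (hM : ∀ k a, M k a 0 = 0)
    {φ φ' g g' : ℕ → A} (hφ : ∀ n, π (φ n) = φ n) (hφ' : ∀ n, π (φ' n) = φ' n)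
    (h : φ + starSeq M g (Jhat J) = φ' + starSeq M g' (Jhat J)) : g = g' := by
  funext n
  induction n using Nat.strong_induction_on with
  | _ n ih =>
    have hn : φ n - φ' n = (g' n - g n) * J := by
      have := congrFun h n
      simp only [Pi.add_apply, starSeq_Jhat_apply_eq_mul_add_tail M J hM0 hM,
        starJhatTail_congr M J ih] at this
      linear_combination this
    have hzero : φ n - φ' n = 0 := by
      rw [← hπJ (g' n - g n), ← hn, map_sub, hφ, hφ']
    exact (sub_eq_zero.1 (hJreg _ (hn ▸ hzero))).symm

end StarJhat

theorem decomposition_F_oplus_Istar_general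
    {R A : Type*} [CommRing R] [CommRing A] [Algebra R A]
    (J : A) (hJreg : ∀ a : A, a * J = 0 → a = 0)
    (π pJ : A →ₗ[R] A)
    (hπidem : ∀ a : A, π (π a) = π a)
    (hπJ : ∀ a : A, π (a * J) = 0)
    (hdecomp : ∀ f : A, f = π f + pJ f * J)
    (M : ℕ → A →ₗ[R] A →ₗ[R] A)
    (hM0 : ∀ f g : A, M 0 f g = f * g) :
    (∀ f : ℕ → A, ∃ φ ι : ℕ → A,
        (∀ n, π (φ n) = φ n) ∧
        (∃ g : ℕ → A, ι = starSeq (fun k a b => M k a b) g (Jhat J)) ∧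
        f = φ + ι) ∧
    (∀ φ φ' ι ι' : ℕ → A,
        (∀ n, π (φ n) = φ n) → (∀ n, π (φ' n) = φ' n) →
        (∃ g : ℕ → A, ι = starSeq (fun k a b => M k a b) g (Jhat J)) →
        (∃ g : ℕ → A, ι' = starSeq (fun k a b => M k a b) g (Jhat J)) →
        φ + ι = φ' + ι' → φ = φ' ∧ ι = ι') := by
  have hM : ∀ k a, M k a 0 = 0 := fun k a => map_zero (M k a)
  refine ⟨fun f => ?_, ?_⟩
  · set g := starJhatQuot (fun k a b => M k a b) J pJ f
    exact ⟨_, _, fixed_sub_starSeq_Jhat_starJhatQuot _ J π pJ hπidem hdecomp hM0 hM f,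
      ⟨g, rfl⟩, (sub_add_cancel _ _).symm⟩
  · rintro φ φ' _ _ hφ hφ' ⟨g, rfl⟩ ⟨g', rfl⟩ h
    obtain rfl := eq_of_add_starSeq_Jhat_eq _ J π.toAddMonoidHom hJreg hπJ hM0 hM hφ hφ' h
    exact ⟨add_right_cancel h, rfl⟩

theorem decomposition_F_oplus_Istar
    {R A : Type*} [CommRing R] [CommRing A] [Algebra R A]
    (J : A) (hJreg : ∀ a : A, a * J = 0 → a = 0)
    (π pJ : A →ₗ[R] A)
    (hπidem : ∀ a : A, π (π a) = π a)
    (hπJ : ∀ a : A, π (a * J) = 0)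
    (hdecomp : ∀ f : A, f = π f + pJ f * J)
    (M : ℕ → A →ₗ[R] A →ₗ[R] A)
    (hM0 : ∀ f g : A, M 0 f g = f * g)
    (hMone : ∀ k, 1 ≤ k → ∀ f : A, M k 1 f = 0 ∧ M k f 1 = 0) :
    (∀ f : ℕ → A, ∃ φ ι : ℕ → A,
        (∀ n, π (φ n) = φ n) ∧
        (∃ g : ℕ → A, ι = starSeq (fun k a b => M k a b) g (Jhat J)) ∧
        f = φ + ι) ∧
    (∀ φ φ' ι ι' : ℕ → A,
        (∀ n, π (φ n) = φ n) → (∀ n, π (φ' n) = φ' n) →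
        (∃ g : ℕ → A, ι = starSeq (fun k a b => M k a b) g (Jhat J)) →
        (∃ g : ℕ → A, ι' = starSeq (fun k a b => M k a b) g (Jhat J)) →
        φ + ι = φ' + ι' → φ = φ' ∧ ι = ι') :=
  decomposition_F_oplus_Istar_general J hJreg π pJ hπidem hπJ hdecomp M hM0
end

section
/- Let n ≥ 0 and let f, g : ℂ^{n+1} \ {0} → ℂ be smooth and homogeneous, i.e. f(c•z) = f(z) and g(c•z) = g(z) for all c ∈ ℂ \ {0} and z ≠ 0. Then for every r ≥ 0 the function z ↦ ‖z‖^{2r} · Σ_{i_1,…,i_r = 1}^{n+1} (∂^r f / ∂z^{i_1} ⋯ ∂z^{i_r})(z) · (∂^r g / ∂z̄^{i_1} ⋯ ∂z̄^{i_r})(z) (which is ‖z‖^{2r} times the r-th Wick product coefficient M_r(f,g) up to the constant 2^r/r!) is again homogeneous: its value at c•z equals its value at z for all c ∈ ℂ \ {0} and z ≠ 0. -/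
/-- The Wirtinger derivative `∂f/∂z^k` (real-Fréchet based). -/
noncomputable def wirtZ {n : ℕ} (k : Fin (n+1))
    (f : EuclideanSpace ℂ (Fin (n+1)) → ℂ) :
    EuclideanSpace ℂ (Fin (n+1)) → ℂ :=
  fun z => (1/2) * (fderiv ℝ f z (EuclideanSpace.single k 1)
    - Complex.I * fderiv ℝ f z (EuclideanSpace.single k Complex.I))

/-- The Wirtinger derivative `∂f/∂z̄^k` (real-Fréchet based). -/
noncomputable def wirtZbar {n : ℕ} (k : Fin (n+1))
    (f : EuclideanSpace ℂ (Fin (n+1)) → ℂ) :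
    EuclideanSpace ℂ (Fin (n+1)) → ℂ :=
  fun z => (1/2) * (fderiv ℝ f z (EuclideanSpace.single k 1)
    + Complex.I * fderiv ℝ f z (EuclideanSpace.single k Complex.I))

/-- Iterated holomorphic Wirtinger derivatives. -/
noncomputable def iterWirtZ {n : ℕ} :
    List (Fin (n+1)) → (EuclideanSpace ℂ (Fin (n+1)) → ℂ) →
      EuclideanSpace ℂ (Fin (n+1)) → ℂ
  | [], f => f
  | k :: ks, f => wirtZ k (iterWirtZ ks f)

/-- Iterated antiholomorphic Wirtinger derivatives. -/
noncomputable def iterWirtZbar {n : ℕ} :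
    List (Fin (n+1)) → (EuclideanSpace ℂ (Fin (n+1)) → ℂ) →
      EuclideanSpace ℂ (Fin (n+1)) → ℂ
  | [], f => f
  | k :: ks, f => wirtZbar k (iterWirtZbar ks f)

section Aux
variable {n : ℕ}
local notation "E" => EuclideanSpace ℂ (Fin (n+1))
open Complex

lemma single_smul' (k : Fin (n+1)) (c w : ℂ) :
    c • EuclideanSpace.single k w = (EuclideanSpace.single k (c*w) : E) := by
  ext j
  simp [EuclideanSpace.single_apply, mul_ite]

lemma single_decomp (k : Fin (n+1)) (w : ℂ) :
    (EuclideanSpace.single k w : E)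
      = (w.re : ℝ) • EuclideanSpace.single k 1 + (w.im : ℝ) • EuclideanSpace.single k Complex.I := by
  ext j
  by_cases hj : j = k <;>
    simp [hj, EuclideanSpace.single_apply, Complex.real_smul, Complex.re_add_im]

lemma fderiv_scale (h : E → ℂ)
    (hd : ContDiffOn ℝ (⊤ : ℕ∞) h {z : E | z ≠ 0}) (c m : ℂ) (hc : c ≠ 0)
    (hhom : ∀ z : E, z ≠ 0 → h (c • z) = m * h z) (z : E) (hz : z ≠ 0) (v : E) :
    fderiv ℝ h (c • z) (c • v) = m * fderiv ℝ h z v := by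
  have hopen : IsOpen {z : E | z ≠ 0} := isOpen_ne
  have hda : ∀ w : E, w ≠ 0 → DifferentiableAt ℝ h w := fun w hw =>
    (hd.contDiffAt (hopen.mem_nhds hw)).differentiableAt (by simp)
  set A : E →L[ℝ] E := (c • ContinuousLinearMap.id ℂ E).restrictScalars ℝ with hA
  have hAapp : ∀ w : E, A w = c • w := fun w => rfl
  have heq : (fun w => h (c • w)) =ᶠ[nhds z] fun w => m * h w :=
    Filter.eventuallyEq_of_mem (hopen.mem_nhds hz) (fun w hw => hhom w hw)
  have h1 : fderiv ℝ (fun w => h (c • w)) z = fderiv ℝ (fun w => m * h w) z :=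
    heq.fderiv_eq
  have h2 : fderiv ℝ (fun w => h (c • w)) z = (fderiv ℝ h (c • z)).comp A := by
    have hcomp := fderiv_comp (𝕜 := ℝ) z (hda _ (smul_ne_zero hc hz)) A.differentiableAt
    have hAf : fderiv ℝ (HSMul.hSMul c : E → E) z = A := A.fderiv
    rw [hAf] at hcomp
    exact hcomp
  have h3 : fderiv ℝ (fun w => m * h w) z = m • fderiv ℝ h z := by
    simpa [smul_eq_mul] using fderiv_fun_const_smul (𝕜 := ℝ) (hda z hz) m
  have := congrArg (fun L : E →L[ℝ] ℂ => L v) (h2.symm.trans (h1.trans h3))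
  simpa [hAapp, smul_eq_mul] using this

lemma fderiv_single_decomp (h : E → ℂ) (z : E) (k : Fin (n+1)) (w : ℂ) :
    fderiv ℝ h z (EuclideanSpace.single k w)
      = (w.re : ℂ) * fderiv ℝ h z (EuclideanSpace.single k 1)
        + (w.im : ℂ) * fderiv ℝ h z (EuclideanSpace.single k Complex.I) := by
  rw [single_decomp]
  simp [Complex.real_smul]

lemma wirtZ_scale (h : E → ℂ)
    (hd : ContDiffOn ℝ (⊤ : ℕ∞) h {z : E | z ≠ 0}) (c m : ℂ) (hc : c ≠ 0)
    (hhom : ∀ z : E, z ≠ 0 → h (c • z) = m * h z) (z : E) (hz : z ≠ 0) (k : Fin (n+1)) :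
    wirtZ k h (c • z) = (m * c⁻¹) * wirtZ k h z := by
  have e1 : fderiv ℝ h (c • z) (EuclideanSpace.single k 1)
      = m * fderiv ℝ h z (EuclideanSpace.single k c⁻¹) := by
    have := fderiv_scale h hd c m hc hhom z hz (EuclideanSpace.single k c⁻¹)
    rwa [single_smul', mul_inv_cancel₀ hc] at this
  have e2 : fderiv ℝ h (c • z) (EuclideanSpace.single k Complex.I)
      = m * fderiv ℝ h z (EuclideanSpace.single k (c⁻¹ * Complex.I)) := by
    have := fderiv_scale h hd c m hc hhom z hz (EuclideanSpace.single k (c⁻¹ * Complex.I))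
    rwa [single_smul', ← mul_assoc, mul_inv_cancel₀ hc, one_mul] at this
  set D1 := fderiv ℝ h z (EuclideanSpace.single k 1) with hD1
  set DI := fderiv ℝ h z (EuclideanSpace.single k Complex.I) with hDI
  have hcinv : (c⁻¹ : ℂ) = ((c⁻¹).re : ℂ) + ((c⁻¹).im : ℂ) * Complex.I :=
    (Complex.re_add_im _).symm
  simp only [wirtZ, e1, e2, fderiv_single_decomp, ← hD1, ← hDI]
  rw [hcinv]
  simp only [Complex.add_re, Complex.add_im, Complex.mul_re, Complex.mul_im,
    Complex.I_re, Complex.I_im, Complex.ofReal_re, Complex.ofReal_im]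
  push_cast
  ring_nf
  linear_combination (m * ((c⁻¹).im : ℂ) * DI / 2) * Complex.I_sq

lemma wirtZbar_scale (h : E → ℂ)
    (hd : ContDiffOn ℝ (⊤ : ℕ∞) h {z : E | z ≠ 0}) (c m : ℂ) (hc : c ≠ 0)
    (hhom : ∀ z : E, z ≠ 0 → h (c • z) = m * h z) (z : E) (hz : z ≠ 0) (k : Fin (n+1)) :
    wirtZbar k h (c • z) = (m * ((starRingEnd ℂ) c)⁻¹) * wirtZbar k h z := by
  have e1 : fderiv ℝ h (c • z) (EuclideanSpace.single k 1)
      = m * fderiv ℝ h z (EuclideanSpace.single k c⁻¹) := by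
    have := fderiv_scale h hd c m hc hhom z hz (EuclideanSpace.single k c⁻¹)
    rwa [single_smul', mul_inv_cancel₀ hc] at this
  have e2 : fderiv ℝ h (c • z) (EuclideanSpace.single k Complex.I)
      = m * fderiv ℝ h z (EuclideanSpace.single k (c⁻¹ * Complex.I)) := by
    have := fderiv_scale h hd c m hc hhom z hz (EuclideanSpace.single k (c⁻¹ * Complex.I))
    rwa [single_smul', ← mul_assoc, mul_inv_cancel₀ hc, one_mul] at this
  set D1 := fderiv ℝ h z (EuclideanSpace.single k 1) with hD1
  set DI := fderiv ℝ h z (EuclideanSpace.single k Complex.I) with hDI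
  have hconj : ((starRingEnd ℂ) c)⁻¹ = ((c⁻¹).re : ℂ) - ((c⁻¹).im : ℂ) * Complex.I := by
    rw [← map_inv₀]
    simp [Complex.ext_iff, neg_div, neg_neg]
  have hcinv : (c⁻¹ : ℂ) = ((c⁻¹).re : ℂ) + ((c⁻¹).im : ℂ) * Complex.I :=
    (Complex.re_add_im _).symm
  simp only [wirtZbar, e1, e2, fderiv_single_decomp, ← hD1, ← hDI]
  rw [hconj, hcinv]
  simp only [Complex.add_re, Complex.add_im, Complex.mul_re, Complex.mul_im,
    Complex.I_re, Complex.I_im, Complex.ofReal_re, Complex.ofReal_im]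
  push_cast
  ring_nf
  linear_combination (m * ((c⁻¹).im : ℂ) * DI / 2) * Complex.I_sq

lemma wirtZ_contDiffOn (h : E → ℂ) (hd : ContDiffOn ℝ (⊤ : ℕ∞) h {z : E | z ≠ 0}) (k : Fin (n+1)) :
    ContDiffOn ℝ (⊤ : ℕ∞) (wirtZ k h) {z : E | z ≠ 0} := by
  have hopen : IsOpen {z : E | z ≠ 0} := isOpen_ne
  have hF : ContDiffOn ℝ (⊤ : ℕ∞) (fderiv ℝ h) {z : E | z ≠ 0} :=
    hd.fderiv_of_isOpen hopen (by simp)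
  have happ : ∀ w : E, ContDiffOn ℝ (⊤ : ℕ∞) (fun z => fderiv ℝ h z w) {z : E | z ≠ 0} := fun w =>
    (ContinuousLinearMap.apply ℝ ℂ w).contDiff.comp_contDiffOn hF
  exact contDiffOn_const.mul ((happ _).sub (contDiffOn_const.mul (happ _)))

lemma wirtZbar_contDiffOn (h : E → ℂ) (hd : ContDiffOn ℝ (⊤ : ℕ∞) h {z : E | z ≠ 0}) (k : Fin (n+1)) :
    ContDiffOn ℝ (⊤ : ℕ∞) (wirtZbar k h) {z : E | z ≠ 0} := by
  have hopen : IsOpen {z : E | z ≠ 0} := isOpen_ne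
  have hF : ContDiffOn ℝ (⊤ : ℕ∞) (fderiv ℝ h) {z : E | z ≠ 0} :=
    hd.fderiv_of_isOpen hopen (by simp)
  have happ : ∀ w : E, ContDiffOn ℝ (⊤ : ℕ∞) (fun z => fderiv ℝ h z w) {z : E | z ≠ 0} := fun w =>
    (ContinuousLinearMap.apply ℝ ℂ w).contDiff.comp_contDiffOn hF
  exact contDiffOn_const.mul ((happ _).add (contDiffOn_const.mul (happ _)))


lemma iterWirtZ_props (f : E → ℂ) (hf : ContDiffOn ℝ (⊤ : ℕ∞) f {z : E | z ≠ 0})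
    (hfhom : ∀ c : ℂ, c ≠ 0 → ∀ z : E, z ≠ 0 → f (c • z) = f z) (L : List (Fin (n+1))) :
    ContDiffOn ℝ (⊤ : ℕ∞) (iterWirtZ L f) {z : E | z ≠ 0} ∧
      ∀ c : ℂ, c ≠ 0 → ∀ z : E, z ≠ 0 →
        iterWirtZ L f (c • z) = (c⁻¹) ^ L.length * iterWirtZ L f z := by
  induction L with
  | nil => exact ⟨hf, fun c hc z hz => by simpa [iterWirtZ] using hfhom c hc z hz⟩
  | cons k ks ih =>
    refine ⟨wirtZ_contDiffOn _ ih.1 k, fun c hc z hz => ?_⟩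
    have := wirtZ_scale (iterWirtZ ks f) ih.1 c ((c⁻¹) ^ ks.length) hc
      (fun w hw => ih.2 c hc w hw) z hz k
    rw [iterWirtZ, this, List.length_cons, pow_succ]

lemma iterWirtZbar_props (f : E → ℂ) (hf : ContDiffOn ℝ (⊤ : ℕ∞) f {z : E | z ≠ 0})
    (hfhom : ∀ c : ℂ, c ≠ 0 → ∀ z : E, z ≠ 0 → f (c • z) = f z) (L : List (Fin (n+1))) :
    ContDiffOn ℝ (⊤ : ℕ∞) (iterWirtZbar L f) {z : E | z ≠ 0} ∧
      ∀ c : ℂ, c ≠ 0 → ∀ z : E, z ≠ 0 →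
        iterWirtZbar L f (c • z) = (((starRingEnd ℂ) c)⁻¹) ^ L.length * iterWirtZbar L f z := by
  induction L with
  | nil => exact ⟨hf, fun c hc z hz => by simpa [iterWirtZbar] using hfhom c hc z hz⟩
  | cons k ks ih =>
    refine ⟨wirtZbar_contDiffOn _ ih.1 k, fun c hc z hz => ?_⟩
    have := wirtZbar_scale (iterWirtZbar ks f) ih.1 c ((((starRingEnd ℂ) c)⁻¹) ^ ks.length) hc
      (fun w hw => ih.2 c hc w hw) z hz k
    rw [iterWirtZbar, this, List.length_cons, pow_succ]


end Aux

theorem wick_coefficient_homogeneous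
    (n : ℕ) (f g : EuclideanSpace ℂ (Fin (n+1)) → ℂ)
    (hf : ContDiffOn ℝ (⊤ : ℕ∞) f {z | z ≠ 0})
    (hg : ContDiffOn ℝ (⊤ : ℕ∞) g {z | z ≠ 0})
    (hfhom : ∀ c : ℂ, c ≠ 0 → ∀ z : EuclideanSpace ℂ (Fin (n+1)), z ≠ 0 →
      f (c • z) = f z)
    (hghom : ∀ c : ℂ, c ≠ 0 → ∀ z : EuclideanSpace ℂ (Fin (n+1)), z ≠ 0 →
      g (c • z) = g z)
    (r : ℕ) :
    ∀ c : ℂ, c ≠ 0 → ∀ z : EuclideanSpace ℂ (Fin (n+1)), z ≠ 0 →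
      ((‖c • z‖ ^ (2*r) : ℝ) : ℂ) *
          ∑ idx : Fin r → Fin (n+1),
            iterWirtZ (List.ofFn idx) f (c • z) *
              iterWirtZbar (List.ofFn idx) g (c • z)
        = ((‖z‖ ^ (2*r) : ℝ) : ℂ) *
          ∑ idx : Fin r → Fin (n+1),
            iterWirtZ (List.ofFn idx) f z * iterWirtZbar (List.ofFn idx) g z := by
  intro c hc z hz
  have hcc : ((starRingEnd ℂ) c) ≠ 0 := by simpa using hc
  have hsum : ∑ idx : Fin r → Fin (n+1),
      iterWirtZ (List.ofFn idx) f (c • z) * iterWirtZbar (List.ofFn idx) g (c • z)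
      = (c⁻¹ ^ r * ((starRingEnd ℂ) c)⁻¹ ^ r) *
        ∑ idx : Fin r → Fin (n+1),
          iterWirtZ (List.ofFn idx) f z * iterWirtZbar (List.ofFn idx) g z := by
    rw [Finset.mul_sum]
    refine Finset.sum_congr rfl fun idx _ => ?_
    rw [(iterWirtZ_props f hf hfhom (List.ofFn idx)).2 c hc z hz,
        (iterWirtZbar_props g hg hghom (List.ofFn idx)).2 c hc z hz,
        List.length_ofFn]
    ring
  rw [hsum, ← mul_assoc]
  congr 1
  have hnorm : (‖c • z‖ : ℝ) ^ (2*r) = (‖c‖^2)^r * ‖z‖^(2*r) := by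
    rw [norm_smul]
    ring
  have hcnorm : ((‖c‖^2 : ℝ) : ℂ) = c * (starRingEnd ℂ) c := by
    rw [Complex.mul_conj, Complex.normSq_eq_norm_sq]
  push_cast at hcnorm
  rw [hnorm]
  push_cast
  rw [hcnorm, mul_pow]
  field_simp
  rw [one_div, one_div, inv_pow, inv_pow]
  have ha : c ^ r * (c ^ r)⁻¹ = 1 := mul_inv_cancel₀ (pow_ne_zero r hc)
  have hb : (starRingEnd ℂ) c ^ r * ((starRingEnd ℂ) c ^ r)⁻¹ = 1 := mul_inv_cancel₀ (pow_ne_zero r hcc)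
  linear_combination (((‖z‖ : ℂ) ^ (2 * r)) * (starRingEnd ℂ) c ^ r * ((starRingEnd ℂ) c ^ r)⁻¹) * ha + ((‖z‖ : ℂ) ^ (2 * r)) * hb
end

section
/- For all integers k ≥ 1 and l ≥ 0, the nested sum Σ_{i_1=1}^{k} Σ_{i_2=1}^{i_1} ⋯ Σ_{i_l=1}^{i_{l−1}} i_1·i_2·⋯·i_l (the sum of the products i_1⋯i_l over all weakly decreasing l-tuples k ≥ i_1 ≥ i_2 ≥ ⋯ ≥ i_l ≥ 1; for l = 0 the sum is the single empty product 1) equals (1/(k−1)!)·Σ_{n=1}^{k} binom(k−1, n−1)·(−1)^{k−n}·n^{k+l−1}. Equivalently, the paper's coefficients A^{(k)}_l := (−1)^l Σ_{i_1=1}^{k} Σ_{i_2=1}^{i_1} ⋯ Σ_{i_l=1}^{i_{l−1}} i_1⋯i_l satisfy A^{(k)}_l = (1/(k−1)!)·Σ_{n=1}^{k} binom(k−1, n−1)·(−1)^{k+l−n}·n^{k+l−1}. -/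
/-- The nested sum `∑_{i_1=1}^{k} ∑_{i_2=1}^{i_1} ⋯ ∑_{i_l=1}^{i_{l-1}} i_1·i_2⋯i_l`
(for `l = 0` it is the single empty product `1`). -/
def nestedSum : ℕ → ℕ → ℕ
  | _, 0 => 1
  | k, (l+1) => ∑ i ∈ Finset.Icc 1 k, i * nestedSum i l
  termination_by _ l => l

/-- Auxiliary alternating sum. -/
def auxS (k m : ℕ) : ℚ :=
  ∑ n ∈ Finset.Icc 1 k, ((k-1).choose (n-1) : ℚ) * (-1)^(k-n) * (n : ℚ)^m

lemma sum_Icc_top {M : Type*} [AddCommMonoid M] (K : ℕ) (f : ℕ → M) :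
    ∑ n ∈ Finset.Icc 1 (K+1), f n = (∑ n ∈ Finset.Icc 1 K, f n) + f (K+1) := by
  rw [← Finset.Ico_add_one_right_eq_Icc, Finset.sum_Ico_succ_top (by omega), Finset.Ico_add_one_right_eq_Icc]

lemma key_nat (K j : ℕ) : K * (K-1).choose j = (K - j) * K.choose j := by
  cases K with
  | zero => simp
  | succ K' =>
    rw [Nat.succ_sub_one, Nat.add_one_mul_choose_eq, Nat.choose_succ_right_eq, Nat.mul_comm]

lemma auxS_one (m : ℕ) : auxS 1 m = 1 := by
  simp [auxS]

lemma auxS_rec (K m : ℕ) (hK : 1 ≤ K) :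
    auxS (K+1) (m+1) = (K+1) * auxS (K+1) m + K * auxS K m := by
  have h1 : auxS (K+1) (m+1) - (K+1) * auxS (K+1) m
      = ∑ n ∈ Finset.Icc 1 (K+1),
          (K.choose (n-1) : ℚ) * (-1)^(K+1-n) * (n:ℚ)^m * ((n:ℚ) - (K+1)) := by
    rw [auxS, auxS, Finset.mul_sum, ← Finset.sum_sub_distrib]
    apply Finset.sum_congr rfl
    intro n _
    simp only [Nat.add_sub_cancel]
    rw [pow_succ]
    ring
  have h2 : ∀ n ∈ Finset.Icc 1 K,
      (K.choose (n-1) : ℚ) * (-1)^(K+1-n) * (n:ℚ)^m * ((n:ℚ) - (K+1))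
      = (K:ℚ) * (((K-1).choose (n-1) : ℚ) * (-1)^(K-n) * (n:ℚ)^m) := by
    intro n hn
    simp only [Finset.mem_Icc] at hn
    have hs : K + 1 - n = (K - n) + 1 := by omega
    have hc : (K:ℚ) * ((K-1).choose (n-1)) = ((K+1-n : ℕ) : ℚ) * (K.choose (n-1)) := by
      have h := key_nat K (n-1)
      have hx : K - (n-1) = K + 1 - n := by omega
      rw [hx] at h
      exact_mod_cast congrArg (Nat.cast : ℕ → ℚ) h
    have hn2 : ((n:ℚ) - ((K:ℚ)+1)) = -(((K+1-n : ℕ)):ℚ) := by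
      rw [Nat.cast_sub (by omega : n ≤ K+1)]
      push_cast
      ring
    rw [hs, pow_succ, hn2]
    linear_combination (-((-1:ℚ)^(K-n)) * (n:ℚ)^m) * hc
  have h3 : auxS (K+1) (m+1) - (K+1) * auxS (K+1) m = K * auxS K m := by
    rw [h1, sum_Icc_top, Finset.sum_congr rfl h2]
    have hlast : (K.choose (K+1-1) : ℚ) * (-1)^(K+1-(K+1)) * ((K+1:ℕ):ℚ)^m
        * (((K+1:ℕ):ℚ) - ((K:ℚ)+1)) = 0 := by
      push_cast
      ring
    rw [hlast, add_zero, auxS, Finset.mul_sum]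
  linarith [h3]

lemma neg_one_pow_sub {i K : ℕ} (h : i ≤ K) : ((-1:ℚ))^(K-i) = (-1)^K * (-1)^i := by
  obtain ⟨d, rfl⟩ := Nat.exists_eq_add_of_le h
  rw [Nat.add_sub_cancel_left, pow_add]
  have : ((-1:ℚ))^i * (-1)^i = 1 := by
    rw [← pow_add, ← two_mul, pow_mul]
    norm_num
  calc ((-1:ℚ))^d = ((-1:ℚ))^i * (-1)^i * (-1)^d := by rw [this, one_mul]
    _ = (-1:ℚ)^i * (-1)^d * (-1)^i := by ring

lemma auxS_zero (k : ℕ) (hk : 2 ≤ k) : auxS k 0 = 0 := by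
  obtain ⟨K, rfl⟩ : ∃ K, k = K + 1 := ⟨k - 1, by omega⟩
  have hK : K ≠ 0 := by omega
  have hrange : auxS (K+1) 0 = ∑ j ∈ Finset.range (K+1),
      (K.choose j : ℚ) * (-1)^(K-j) := by
    rw [auxS, ← Finset.Ico_add_one_right_eq_Icc, Finset.sum_Ico_eq_sum_range]
    apply Finset.sum_congr (by norm_num)
    intro j _
    have h1 : 1 + j - 1 = j := by omega
    have h2 : K + 1 - (1 + j) = K - j := by omega
    simp [h1, h2]
  have halt : (∑ j ∈ Finset.range (K + 1), ((-1:ℚ)) ^ j * (K.choose j : ℚ)) = 0 := by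
    have := Int.alternating_sum_range_choose_of_ne hK
    exact_mod_cast congrArg (Int.cast : ℤ → ℚ) this
  rw [hrange]
  calc ∑ j ∈ Finset.range (K+1), (K.choose j : ℚ) * (-1)^(K-j)
      = ∑ j ∈ Finset.range (K+1), (-1:ℚ)^K * ((-1)^j * (K.choose j : ℚ)) := by
        apply Finset.sum_congr rfl
        intro j hj
        rw [neg_one_pow_sub (by simpa using Nat.lt_succ_iff.mp (Finset.mem_range.mp hj))]
        ring
    _ = (-1:ℚ)^K * ∑ j ∈ Finset.range (K+1), (-1:ℚ)^j * (K.choose j : ℚ) := by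
        rw [Finset.mul_sum]
    _ = 0 := by rw [halt, mul_zero]

lemma auxS_val : ∀ m k : ℕ, 1 ≤ k → m + 1 ≤ k →
    auxS k m = if m + 1 = k then ((k-1).factorial : ℚ) else 0 := by
  intro m
  induction m with
  | zero =>
    intro k hk1 _
    rcases Nat.lt_or_ge k 2 with h | h
    · have : k = 1 := by omega
      subst this
      simp [auxS_one]
    · rw [auxS_zero k h, if_neg (by omega)]
  | succ m ih =>
    intro k hk1 hk
    obtain ⟨K, rfl⟩ : ∃ K, k = K + 1 := ⟨k - 1, by omega⟩
    have hK : 1 ≤ K := by omega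
    rw [auxS_rec K m hK, ih (K+1) (by omega) (by omega), ih K hK (by omega)]
    rw [if_neg (by omega : ¬ m + 1 = K + 1)]
    by_cases h : m + 1 = K
    · rw [if_pos h, if_pos (by omega)]
      have : (K:ℚ) * ((K-1).factorial : ℚ) = (K.factorial : ℚ) := by
        exact_mod_cast congrArg (Nat.cast : ℕ → ℚ) (Nat.mul_factorial_pred (by omega))
      rw [mul_zero, zero_add, this]
      simp
    · rw [if_neg h, if_neg (by omega)]
      ring

lemma nestedSum_one (l : ℕ) : nestedSum 1 l = 1 := by
  induction l with
  | zero => simp [nestedSum]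
  | succ l ih => simp [nestedSum, ih]

lemma nestedSum_main : ∀ l k : ℕ, 1 ≤ k →
    (nestedSum k l : ℚ) * (((k-1).factorial : ℕ) : ℚ) = auxS k (k + l - 1) := by
  intro l
  induction l with
  | zero =>
    intro k hk
    have h0 : nestedSum k 0 = 1 := by simp [nestedSum]
    rw [h0, show k + 0 - 1 = k - 1 from by omega,
      auxS_val (k-1) k hk (by omega), if_pos (by omega)]
    simp
  | succ l ih =>
    intro k hk
    induction k with
    | zero => omega
    | succ K ihK =>
      rcases Nat.eq_or_lt_of_le hk with h1 | h1
      · -- K + 1 = 1, i.e. K = 0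
        have hK0 : K = 0 := by omega
        subst hK0
        rw [nestedSum_one]
        simpa using (auxS_one (l + 1)).symm
      · have hK : 1 ≤ K := by omega
        have hrecN : nestedSum (K+1) (l+1)
            = nestedSum K (l+1) + (K+1) * nestedSum (K+1) l := by
          rw [show nestedSum (K+1) (l+1) = ∑ i ∈ Finset.Icc 1 (K+1), i * nestedSum i l
              from by simp [nestedSum],
            show nestedSum K (l+1) = ∑ i ∈ Finset.Icc 1 K, i * nestedSum i l
              from by simp [nestedSum],
            sum_Icc_top K (fun i => i * nestedSum i l)]
        have hrec : (nestedSum (K+1) (l+1) : ℚ)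
            = (nestedSum K (l+1) : ℚ) + ((K:ℚ)+1) * (nestedSum (K+1) l : ℚ) := by
          rw [hrecN]
          push_cast
          ring
        have hfac : (((K+1-1).factorial : ℕ) : ℚ)
            = ((K:ℚ)) * (((K-1).factorial : ℕ) : ℚ) := by
          have : (K : ℕ) * (K-1).factorial = K.factorial := Nat.mul_factorial_pred (by omega)
          simp only [Nat.add_sub_cancel]
          exact_mod_cast (congrArg (Nat.cast : ℕ → ℚ) this).symm
        have hinner := ihK hK  -- nestedSum K (l+1) * (K-1)! = auxS K (K + (l+1) - 1)
        have houter := ih (K+1) (by omega)  -- nestedSum (K+1) l * K! = auxS (K+1) (K+1+l-1)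
        have e1 : K + (l+1) - 1 = K + l := by omega
        have e2 : K + 1 + l - 1 = K + l := by omega
        have e3 : K + 1 + (l+1) - 1 = (K + l) + 1 := by omega
        rw [e1] at hinner
        rw [e2] at houter
        rw [e3, auxS_rec K (K+l) hK, hrec]
        simp only [Nat.add_sub_cancel] at houter hfac ⊢
        linear_combination (K:ℚ) * hinner + ((K:ℚ)+1) * houter
          + (nestedSum K (l+1) : ℚ) * hfac

theorem nestedSum_closed_formula (k l : ℕ) (hk : 1 ≤ k) :
    (nestedSum k l : ℚ) =
      (1 / (k-1).factorial : ℚ) * ∑ n ∈ Finset.Icc 1 k,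
        ((k-1).choose (n-1) : ℚ) * (-1)^(k-n) * (n : ℚ)^(k+l-1) ∧
    ((-1 : ℚ)^l * (nestedSum k l : ℚ) =
      (1 / (k-1).factorial : ℚ) * ∑ n ∈ Finset.Icc 1 k,
        ((k-1).choose (n-1) : ℚ) * (-1)^(k+l-n) * (n : ℚ)^(k+l-1)) := by
  have hf : (((k-1).factorial : ℕ) : ℚ) ≠ 0 := by
    exact_mod_cast Nat.cast_ne_zero.mpr (Nat.factorial_ne_zero _)
  have hmain := nestedSum_main l k hk
  have hfirst : (nestedSum k l : ℚ) =
      (1 / (k-1).factorial : ℚ) * ∑ n ∈ Finset.Icc 1 k,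
        ((k-1).choose (n-1) : ℚ) * (-1)^(k-n) * (n : ℚ)^(k+l-1) := by
    rw [show (∑ n ∈ Finset.Icc 1 k,
        ((k-1).choose (n-1) : ℚ) * (-1)^(k-n) * (n : ℚ)^(k+l-1)) = auxS k (k+l-1) from rfl]
    rw [← hmain]
    field_simp
  refine ⟨hfirst, ?_⟩
  have hsum : (∑ n ∈ Finset.Icc 1 k,
      ((k-1).choose (n-1) : ℚ) * (-1)^(k+l-n) * (n : ℚ)^(k+l-1))
      = (-1:ℚ)^l * ∑ n ∈ Finset.Icc 1 k,
      ((k-1).choose (n-1) : ℚ) * (-1)^(k-n) * (n : ℚ)^(k+l-1) := by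
    rw [Finset.mul_sum]
    apply Finset.sum_congr rfl
    intro n hn
    simp only [Finset.mem_Icc] at hn
    have : k + l - n = (k - n) + l := by omega
    rw [this, pow_add]
    ring
  rw [hsum, hfirst]
  ring
end

section
/- Let n ≥ 0 and let f : ℂ^{n+1} \ {0} → ℂ be smooth. Then f is homogeneous (f(c•z) = f(z) for all c ∈ ℂ \ {0} and all z ≠ 0) if and only if the Euler operators annihilate f, i.e. for every z ≠ 0 the real Fréchet derivative of f at z satisfies Df(z)[z] = 0 and Df(z)[i•z] = 0 (equivalently, E f = 0 and Ē f = 0 for E = Σ z^k ∂/∂z^k and Ē = Σ z̄^k ∂/∂z̄^k). -/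
open Complex

lemma smul_decomp {E : Type*} [NormedAddCommGroup E] [NormedSpace ℂ E]
    (v : ℂ) (y : E) : v • y = v.re • y + v.im • (Complex.I • y) := by
  have hv : v = (v.re : ℂ) + (v.im : ℂ) * Complex.I := (Complex.re_add_im v).symm
  rw [← Complex.coe_smul, ← Complex.coe_smul, smul_smul, ← add_smul, ← hv]

theorem homogeneous_iff_euler_operators_vanish
    (n : ℕ) (f : EuclideanSpace ℂ (Fin (n+1)) → ℂ)
    (hf : ContDiffOn ℝ (⊤ : ℕ∞) f {z | z ≠ 0}) :
    (∀ c : ℂ, c ≠ 0 → ∀ z : EuclideanSpace ℂ (Fin (n+1)), z ≠ 0 →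
        f (c • z) = f z) ↔
    (∀ z : EuclideanSpace ℂ (Fin (n+1)), z ≠ 0 →
        fderiv ℝ f z z = 0 ∧ fderiv ℝ f z (Complex.I • z) = 0) := by
  have hopen : IsOpen {z : EuclideanSpace ℂ (Fin (n+1)) | z ≠ 0} := isOpen_ne
  have hdiff : ∀ z : EuclideanSpace ℂ (Fin (n+1)), z ≠ 0 → DifferentiableAt ℝ f z := fun z hz =>
    ((hf.contDiffAt (hopen.mem_nhds hz)).differentiableAt (by simp))
  constructor
  · intro h z hz
    set L : ℂ →L[ℝ] EuclideanSpace ℂ (Fin (n+1)) :=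
      (1 : ℂ →L[ℝ] ℂ).smulRight z with hLdef
    have hL : ∀ c : ℂ, L c = c • z := fun c => by
      simp [hLdef]
    have hgc : (f ∘ L) =ᶠ[nhds (1:ℂ)] fun _ => f z := by
      filter_upwards [(isOpen_ne : IsOpen {c : ℂ | c ≠ 0}).mem_nhds (by norm_num)] with c hc
      simp only [Function.comp_apply, hL]
      exact h c hc z hz
    have h0 : fderiv ℝ (f ∘ L) 1 = 0 := by
      rw [hgc.fderiv_eq, fderiv_const_apply]
    have hL1 : L (1:ℂ) = z := by rw [hL, one_smul]
    have hcomp : fderiv ℝ (f ∘ L) 1 = (fderiv ℝ f z).comp L := by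
      rw [fderiv_comp _ (hL1 ▸ hdiff z hz) L.differentiableAt, L.fderiv, hL1]
    rw [hcomp] at h0
    constructor
    · have := DFunLike.congr_fun h0 (1:ℂ)
      simpa [hL1] using this
    · have := DFunLike.congr_fun h0 Complex.I
      simpa [hL] using this
  · intro h c hc z hz
    set L : ℂ →L[ℝ] EuclideanSpace ℂ (Fin (n+1)) :=
      (1 : ℂ →L[ℝ] ℂ).smulRight z with hLdef
    have hL : ∀ c : ℂ, L c = c • z := fun c => by simp [hLdef]
    have key : ∀ w : ℂ, HasFDerivAt (fun w : ℂ => f (Complex.exp w • z)) (0 : ℂ →L[ℝ] ℂ) w := by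
      intro w
      have hyne : Complex.exp w • z ≠ 0 := smul_ne_zero (Complex.exp_ne_zero w) hz
      have hexp : HasFDerivAt Complex.exp
          (((1 : ℂ →L[ℂ] ℂ).smulRight (Complex.exp w)).restrictScalars ℝ) w :=
        ((Complex.hasDerivAt_exp w).hasFDerivAt).restrictScalars ℝ
      have hinner : HasFDerivAt (fun w : ℂ => Complex.exp w • z)
          (L.comp (((1 : ℂ →L[ℂ] ℂ).smulRight (Complex.exp w)).restrictScalars ℝ)) w := by
        have : (fun w : ℂ => Complex.exp w • z) = L ∘ Complex.exp := by
          ext w; simp [hL]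
        rw [this]
        exact (L.hasFDerivAt).comp w hexp
      have hfd : HasFDerivAt f (fderiv ℝ f (Complex.exp w • z)) (Complex.exp w • z) :=
        (hdiff _ hyne).hasFDerivAt
      have htot := hfd.comp w hinner
      refine htot.congr_fderiv ?_
      ext v
      simp only [ContinuousLinearMap.comp_apply, ContinuousLinearMap.coe_restrictScalars',
        ContinuousLinearMap.smulRight_apply, ContinuousLinearMap.one_apply,
        ContinuousLinearMap.zero_apply, hL]
      have hdir : (v * Complex.exp w) • z
          = v.re • (Complex.exp w • z) + v.im • (Complex.I • (Complex.exp w • z)) := by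
        rw [mul_smul, smul_decomp v (Complex.exp w • z)]
      rw [show v • Complex.exp w = v * Complex.exp w from rfl, hdir,
        (fderiv ℝ f (Complex.exp w • z)).map_add,
        (fderiv ℝ f (Complex.exp w • z)).map_smul,
        (fderiv ℝ f (Complex.exp w • z)).map_smul,
        (h _ hyne).1, (h _ hyne).2]
      simp
    have hconst : f (Complex.exp (Complex.log c) • z) = f (Complex.exp 0 • z) :=
      is_const_of_fderiv_eq_zero (𝕜 := ℝ) (fun w => (key w).differentiableAt)
        (fun w => (key w).fderiv) _ _
    rwa [Complex.exp_log hc, Complex.exp_zero, one_smul] at hconst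
end

section
/- Let n ≥ 0, μ < 0, S := {z ∈ ℂ^{n+1} | ‖z‖² = −2μ}, and p(z) := (√(−2μ)/‖z‖)·z the radial projection onto S. Let f : ℂ^{n+1} \ {0} → ℂ be smooth and suppose (a) f is a pure (radial) prolongation: f(z) = f(p(z)) for all z ≠ 0, and (b) the phase derivative of f vanishes on S: Df(z)[i•z] = 0 for all z ∈ S. Then f is homogeneous: f(c•z) = f(z) for all c ∈ ℂ \ {0} and all z ≠ 0. -/
open Complex

theorem radial_prolongation_in_B_is_homogeneous
    (n : ℕ) (μ : ℝ) (hμ : μ < 0)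
    (f : EuclideanSpace ℂ (Fin (n+1)) → ℂ)
    (hf : ContDiffOn ℝ (⊤ : ℕ∞) f {z | z ≠ 0})
    (ha : ∀ z : EuclideanSpace ℂ (Fin (n+1)), z ≠ 0 →
      f z = f ((Real.sqrt (-2*μ) / ‖z‖) • z))
    (hb : ∀ z : EuclideanSpace ℂ (Fin (n+1)), ‖z‖^2 = -2*μ →
      fderiv ℝ f z (Complex.I • z) = 0) :
    ∀ c : ℂ, c ≠ 0 → ∀ z : EuclideanSpace ℂ (Fin (n+1)), z ≠ 0 →
      f (c • z) = f z := by
  have hopen : IsOpen {z : EuclideanSpace ℂ (Fin (n+1)) | z ≠ 0} :=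
    isOpen_compl_singleton
  -- Key: phase invariance on the sphere S
  have key : ∀ v : EuclideanSpace ℂ (Fin (n+1)), ‖v‖^2 = -2*μ →
      ∀ θ : ℝ, f (Complex.exp (θ * Complex.I) • v) = f v := by
    intro v hv θ
    have hvn : ‖v‖ ≠ 0 := by
      intro h
      rw [h] at hv
      nlinarith
    have hnorm : ∀ t : ℝ, ‖Complex.exp (t * Complex.I) • v‖ = ‖v‖ := by
      intro t
      rw [norm_smul, Complex.norm_exp_ofReal_mul_I, one_mul]
    have hsq : ∀ t : ℝ, ‖Complex.exp (t * Complex.I) • v‖^2 = -2*μ := by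
      intro t; rw [hnorm]; exact hv
    set g : ℝ → ℂ := fun t => f (Complex.exp (t * Complex.I) • v) with hg
    have hderiv : ∀ t : ℝ, HasDerivAt g 0 t := by
      intro t
      have h0 : HasDerivAt (fun t : ℝ => (t : ℂ) * Complex.I) Complex.I t := by
        simpa using (Complex.ofRealCLM.hasDerivAt (x := t)).mul_const Complex.I
      have h1 : HasDerivAt (fun t : ℝ => Complex.exp (t * Complex.I))
          (Complex.exp (t * Complex.I) * Complex.I) t := h0.cexp
      have hcurve : HasDerivAt (fun t : ℝ => Complex.exp (t * Complex.I) • v)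
          ((Complex.exp (t * Complex.I) * Complex.I) • v) t := h1.smul_const v
      have hne : Complex.exp (t * Complex.I) • v ≠ 0 := by
        intro h
        have := hnorm t
        rw [h, norm_zero] at this
        exact hvn this.symm
      have hfd : DifferentiableAt ℝ f (Complex.exp (t * Complex.I) • v) := by
        have := (hf.contDiffAt (hopen.mem_nhds hne)).differentiableAt (by simp)
        exact this
      have hcomp := hfd.hasFDerivAt.comp_hasDerivAt t hcurve
      have heq : (Complex.exp (t * Complex.I) * Complex.I) • v
          = Complex.I • (Complex.exp (t * Complex.I) • v) := by
        rw [smul_smul, mul_comm]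
      rw [heq] at hcomp
      have hz := hb _ (hsq t)
      rw [hz] at hcomp
      exact hcomp
    have hconst := is_const_of_deriv_eq_zero (𝕜 := ℝ)
      (fun x => (hderiv x).differentiableAt) (fun x => (hderiv x).deriv) θ 0
    simpa [hg, Complex.exp_zero] using hconst
  -- Main argument
  intro c hc z hz
  have hznorm : (0:ℝ) < ‖z‖ := norm_pos_iff.mpr hz
  set r := Real.sqrt (-2*μ) with hr
  have hrpos : 0 < r := Real.sqrt_pos.mpr (by linarith)
  set w : EuclideanSpace ℂ (Fin (n+1)) := (r / ‖z‖) • z with hw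
  have hwnorm : ‖w‖ = r := by
    rw [hw, norm_smul, Real.norm_eq_abs, abs_of_pos (div_pos hrpos hznorm),
      div_mul_cancel₀ _ (ne_of_gt hznorm)]
  have hwsq : ‖w‖^2 = -2*μ := by
    rw [hwnorm, hr, Real.sq_sqrt (by linarith)]
  have hcz : c • z ≠ 0 := smul_ne_zero hc hz
  have hcnorm : (0:ℝ) < ‖c‖ := norm_pos_iff.mpr hc
  -- rewrite radial projection of c • z as a phase rotation of w
  have habs : ‖c / (‖c‖ : ℂ)‖ = 1 := by
    rw [norm_div, Complex.norm_of_nonneg hcnorm.le,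
      div_self (ne_of_gt hcnorm)]
  obtain ⟨θ, hθ⟩ := (Complex.norm_eq_one_iff _).mp habs
  have hproj : (r / ‖c • z‖) • (c • z) = Complex.exp (θ * Complex.I) • w := by
    rw [hθ]
    have h1 : ∀ (a : ℝ) (x : EuclideanSpace ℂ (Fin (n+1))), a • x = ((a : ℂ)) • x := by
      intro a x
      rw [← algebraMap_smul ℂ a x]
      rfl
    rw [hw, h1, h1, norm_smul, smul_smul, smul_smul]
    congr 1
    push_cast
    field_simp
  calc f (c • z) = f ((r / ‖c • z‖) • (c • z)) := ha _ hcz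
    _ = f (Complex.exp (θ * Complex.I) • w) := by rw [hproj]
    _ = f w := key w hwsq θ
    _ = f z := (ha z hz).symm
end
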